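/- Let (X1,X2,X3,X4) be a random vector on finite sets with positive marginals whose entropy function is a·r1 + b·r2, where r1 is the rank function of Û^4_{3,5} and r2 that of U_{2,4}. Then X1, X2, X3 are uniformly distributed on alphabets of a common size v, and a + b = log v. -/

import Mathlib

/-!
For distinct `i, j ∈ {1, 2, 3}` the entropy profile gives `H(X_i X_j) = H(X_i) + H(X_j)`,
`H(X_i X_4) = H(X_i) + H(X_4)` and `H(X_j X_4) = H(X_i X_j X_4)`. By the equality case of Gibbs'
inequality the first two say that `X_i` is independent of `X_j` and of `X_4`; the third says that
`X_i` is a function of `(X_j, X_4)` on the support. Fix a value `y` of `X_j` and let `S_u` be the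
set of values of `X_4` seen together with `X_i = u, X_j = y`. The sets `S_u` are disjoint, and
independence gives `P(X_j = y) ≤ P(X_4 ∈ S_u)` for every `u`; summing over `u` yields
`|𝒳_i| · P(X_j = y) ≤ 1`. Summing over `y` gives `|𝒳_i| ≤ |𝒳_j|`, so the three alphabets have a
common size `v`, the bound then forces each `X_j` to be uniform, and `a + b = H(X_1) = log v`.
-/

open Finset
open scoped BigOperators
noncomputable section

/-- Probability that the `A`-marginal of the random vector with joint pmf `p`
takes the same value as on `x`. -/
def margProb {n : ℕ} {m : Fin n → ℕ} (p : (∀ i, Fin (m i)) → ℝ)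
    (A : Finset (Fin n)) (x : ∀ i, Fin (m i)) : ℝ :=
  ∑ y : ∀ i, Fin (m i), if ∀ i ∈ A, y i = x i then p y else 0

/-- The Shannon entropy `H(X_A)` of the subvector indexed by `A`, for the random
vector with joint pmf `p`. -/
def jointEntropy {n : ℕ} {m : Fin n → ℕ} (p : (∀ i, Fin (m i)) → ℝ)
    (A : Finset (Fin n)) : ℝ :=
  -∑ x : ∀ i, Fin (m i), p x * Real.log (margProb p A x)

/-- `p` is a probability mass function. -/
def IsPMF {α : Type*} [Fintype α] (p : α → ℝ) : Prop :=
  (∀ x, 0 ≤ p x) ∧ ∑ x, p x = 1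

/-- `h` is an entropy function of degree `n`: it arises as `A ↦ H(X_A)` for a
random vector `(X_1, …, X_n)` on finite sets. -/
def IsEntropyFunc (n : ℕ) (h : Finset (Fin n) → ℝ) : Prop :=
  ∃ (m : Fin n → ℕ) (p : (∀ i, Fin (m i)) → ℝ), IsPMF p ∧ ∀ A, jointEntropy p A = h A

/-- Marginal probability of the single coordinate `i` taking value `x`. -/
def marg1 {n : ℕ} {m : Fin n → ℕ} (p : (∀ i, Fin (m i)) → ℝ)
    (i : Fin n) (x : Fin (m i)) : ℝ :=
  ∑ y : ∀ j, Fin (m j), if y i = x then p y else 0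

/-- Marginal probability of the pair of coordinates `(i, j)` taking values `(x, y)`. -/
def marg2 {n : ℕ} {m : Fin n → ℕ} (p : (∀ i, Fin (m i)) → ℝ)
    (i j : Fin n) (x : Fin (m i)) (y : Fin (m j)) : ℝ :=
  ∑ z : ∀ k, Fin (m k), if z i = x ∧ z j = y then p z else 0

/-- Rank function of `Û^4_{3,5}` (index `3` plays the role of element `4`). -/
def rU35hat4 (A : Finset (Fin 4)) : ℝ :=
  if (3 : Fin 4) ∈ A then min 3 ((A.card : ℝ) + 1) else (A.card : ℝ)

/-- Rank function of the uniform matroid `U_{2,4}`. -/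
def r24 (A : Finset (Fin 4)) : ℝ := min 2 (A.card : ℝ)

theorem eq_of_sum_mul_log_eq {ι : Type*} [Fintype ι] {r s : ι → ℝ} (hr : ∀ x, 0 ≤ r x)
    (hs : ∀ x, 0 < s x) (hsum : ∑ x, r x = ∑ x, s x)
    (hlog : ∑ x, r x * Real.log (r x) = ∑ x, r x * Real.log (s x)) : r = s := by
  have hkl : ∀ x, s x * InformationTheory.klFun (r x / s x)
      = r x * Real.log (r x) - r x * Real.log (s x) + s x - r x := by
    intro x
    rw [InformationTheory.klFun_apply]
    rcases (hr x).eq_or_lt with h0 | h0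
    · simp [← h0]
    · have hsx := (hs x).ne'
      rw [Real.log_div h0.ne' hsx]
      field_simp
  have hzero : ∑ x, s x * InformationTheory.klFun (r x / s x) = 0 := by
    simp only [hkl, sum_add_distrib, sum_sub_distrib]
    linarith
  have hnonneg : ∀ x ∈ univ, 0 ≤ s x * InformationTheory.klFun (r x / s x) := fun x _ =>
    mul_nonneg (hs x).le (InformationTheory.klFun_nonneg (div_nonneg (hr x) (hs x).le))
  funext x
  have hx := (sum_eq_zero_iff_of_nonneg hnonneg).mp hzero x (mem_univ x)
  rcases mul_eq_zero.mp hx with h | h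
  · exact absurd h (hs x).ne'
  · exact (div_eq_one_iff_eq (hs x).ne').mp
      ((InformationTheory.klFun_eq_zero_iff (div_nonneg (hr x) (hs x).le)).mp h)

theorem le_card_of_sum_eq_one {ι : Type*} [Fintype ι] {f : ι → ℝ} {c : ℝ}
    (hf : ∑ i, f i = 1) (h : ∀ i, c * f i ≤ 1) : c ≤ Fintype.card ι := by
  calc c = ∑ i, c * f i := by rw [← mul_sum, hf, mul_one]
    _ ≤ ∑ _i : ι, (1 : ℝ) := sum_le_sum fun i _ => h i
    _ = Fintype.card ι := by simp

theorem eq_inv_card_of_sum_eq_one {ι : Type*} [Fintype ι] {f : ι → ℝ}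
    (hf : ∑ i, f i = 1) (h : ∀ i, Fintype.card ι * f i ≤ 1) (i : ι) :
    f i = (Fintype.card ι : ℝ)⁻¹ := by
  have hzero : ∑ i, (1 - Fintype.card ι * f i) = 0 := by
    rw [sum_sub_distrib, ← mul_sum, hf]; simp
  have hi := (sum_eq_zero_iff_of_nonneg fun i _ => sub_nonneg.mpr (h i)).mp hzero i (mem_univ i)
  exact eq_inv_of_mul_eq_one_right (by linarith)

section

variable {n : ℕ} {m : Fin n → ℕ} (p : (∀ i, Fin (m i)) → ℝ)

theorem sum_marg1_mul (i : Fin n) (g : Fin (m i) → ℝ) :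
    ∑ u, marg1 p i u * g u = ∑ x, p x * g (x i) := by
  simp only [marg1, sum_mul, ite_mul, zero_mul]
  rw [sum_comm]
  exact sum_congr rfl fun x _ => by simp [eq_comm]

theorem sum_marg2_mul (i j : Fin n) (g : Fin (m i) → Fin (m j) → ℝ) :
    ∑ u, ∑ v, marg2 p i j u v * g u v = ∑ x, p x * g (x i) (x j) := by
  simp only [marg2, sum_mul, ite_mul, zero_mul]
  rw [sum_comm, sum_congr rfl fun u _ => sum_comm, sum_comm]
  exact sum_congr rfl fun x _ => by simp [ite_and, eq_comm]

theorem sum_marg1 (hp : ∑ x, p x = 1) (i : Fin n) : ∑ u, marg1 p i u = 1 := by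
  simpa [hp] using sum_marg1_mul p i 1

theorem sum_marg2 (hp : ∑ x, p x = 1) (i j : Fin n) : ∑ u, ∑ v, marg2 p i j u v = 1 := by
  simpa [hp] using sum_marg2_mul p i j fun _ _ => 1

theorem marg1_nonneg (hp : ∀ x, 0 ≤ p x) (i : Fin n) (u : Fin (m i)) : 0 ≤ marg1 p i u :=
  sum_nonneg fun x _ => by split_ifs <;> simp [hp x]

theorem marg2_nonneg (hp : ∀ x, 0 ≤ p x) (i j : Fin n) (u : Fin (m i)) (v : Fin (m j)) :
    0 ≤ marg2 p i j u v :=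
  sum_nonneg fun x _ => by split_ifs <;> simp [hp x]

theorem sum_marg2_mem (i t : Fin n) (u : Fin (m i)) (S : Finset (Fin (m t))) :
    ∑ w ∈ S, marg2 p i t u w = ∑ x, if x i = u ∧ x t ∈ S then p x else 0 := by
  simp only [marg2]
  rw [sum_comm]
  exact sum_congr rfl fun x _ => by by_cases h : x i = u <;> simp [h, eq_comm]

theorem jointEntropy_singleton (i : Fin n) :
    jointEntropy p {i} = -∑ x, p x * Real.log (marg1 p i (x i)) := by
  simp only [jointEntropy, margProb, marg1, mem_singleton, forall_eq]

theorem jointEntropy_pair (i j : Fin n) :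
    jointEntropy p {i, j} = -∑ u, ∑ v, marg2 p i j u v * Real.log (marg2 p i j u v) := by
  rw [sum_marg2_mul p i j fun u v => Real.log (marg2 p i j u v)]
  simp only [jointEntropy, margProb, marg2, mem_insert, mem_singleton, forall_eq_or_imp,
    forall_eq]

theorem jointEntropy_singleton_of_uniform (hp : ∑ x, p x = 1) {i : Fin n}
    (huni : ∀ u, marg1 p i u = (m i : ℝ)⁻¹) : jointEntropy p {i} = Real.log (m i) := by
  simp only [jointEntropy_singleton, huni, ← sum_mul, hp, one_mul, Real.log_inv, neg_neg]

theorem marg2_eq_mul_of_jointEntropy_pair {i j : Fin n} (hp : IsPMF p)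
    (hi : ∀ u, 0 < marg1 p i u) (hj : ∀ v, 0 < marg1 p j v)
    (hH : jointEntropy p {i, j} = jointEntropy p {i} + jointEntropy p {j})
    (u : Fin (m i)) (v : Fin (m j)) : marg2 p i j u v = marg1 p i u * marg1 p j v := by
  have hcross : jointEntropy p {i} + jointEntropy p {j} = -∑ u, ∑ v,
      marg2 p i j u v * Real.log (marg1 p i u * marg1 p j v) := by
    simp only [Real.log_mul (hi _).ne' (hj _).ne']
    rw [sum_marg2_mul p i j fun u v => Real.log (marg1 p i u) + Real.log (marg1 p j v),
      jointEntropy_singleton, jointEntropy_singleton, ← neg_add, ← sum_add_distrib]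
    simp only [mul_add]
  rw [jointEntropy_pair, hcross, neg_inj] at hH
  have hprod := eq_of_sum_mul_log_eq (r := fun y : Fin (m i) × Fin (m j) => marg2 p i j y.1 y.2)
    (s := fun y => marg1 p i y.1 * marg1 p j y.2)
    (fun y => marg2_nonneg p hp.1 i j y.1 y.2) (fun y => mul_pos (hi y.1) (hj y.2))
    (by simp only [Fintype.sum_prod_type, ← sum_mul_sum, sum_marg1 p hp.2, sum_marg2 p hp.2,
      mul_one])
    (by simpa only [Fintype.sum_prod_type] using hH)
  exact congrFun hprod (u, v)

theorem margProb_eq_sum_filter (A : Finset (Fin n)) (x : ∀ i, Fin (m i)) :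
    margProb p A x = ∑ y ∈ univ.filter fun y => ∀ i ∈ A, y i = x i, p y :=
  (sum_filter _ _).symm

variable {p}

theorem margProb_anti (hp : ∀ x, 0 ≤ p x) {A B : Finset (Fin n)} (hAB : A ⊆ B)
    (x : ∀ i, Fin (m i)) : margProb p B x ≤ margProb p A x := by
  simp only [margProb_eq_sum_filter]
  exact sum_le_sum_of_subset_of_nonneg (monotone_filter_right _ fun y _ hy i hi => hy i (hAB hi))
    fun y _ _ => hp y

theorem le_margProb (hp : ∀ x, 0 ≤ p x) (A : Finset (Fin n)) (x : ∀ i, Fin (m i)) :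
    p x ≤ margProb p A x := by
  rw [margProb_eq_sum_filter]
  exact single_le_sum (fun y _ => hp y) (by simp)

theorem margProb_add_le (hp : ∀ x, 0 ≤ p x) {A B : Finset (Fin n)} (hAB : A ⊆ B)
    {x x' : ∀ i, Fin (m i)} (hA : ∀ i ∈ A, x' i = x i) (hB : ¬∀ i ∈ B, x' i = x i) :
    margProb p B x + p x' ≤ margProb p A x := by
  simp only [margProb_eq_sum_filter]
  rw [add_comm, ← sum_insert (by simpa using hB)]
  refine sum_le_sum_of_subset_of_nonneg (insert_subset (by simpa using hA) ?_) fun y _ _ => hp y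
  exact monotone_filter_right _ fun y _ hy i hi => hy i (hAB hi)

theorem margProb_eq_of_jointEntropy_eq (hp : ∀ x, 0 ≤ p x) {A B : Finset (Fin n)}
    (hAB : A ⊆ B) (hH : jointEntropy p A = jointEntropy p B) {x : ∀ i, Fin (m i)}
    (hx : 0 < p x) : margProb p A x = margProb p B x := by
  have hpos : ∀ y, 0 < p y → 0 < margProb p B y := fun y hy => hy.trans_le (le_margProb hp B y)
  have hterm : ∀ y ∈ univ,
      0 ≤ p y * (Real.log (margProb p A y) - Real.log (margProb p B y)) := by
    intro y _
    rcases (hp y).eq_or_lt with h | h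
    · simp [← h]
    · exact mul_nonneg h.le
        (sub_nonneg.mpr (Real.log_le_log (hpos y h) (margProb_anti hp hAB y)))
  have hsum : ∑ y, p y * (Real.log (margProb p A y) - Real.log (margProb p B y)) = 0 := by
    simp only [jointEntropy] at hH
    simp only [mul_sub, sum_sub_distrib]
    linarith
  have hlog := (sum_eq_zero_iff_of_nonneg hterm).mp hsum x (mem_univ x)
  rw [mul_eq_zero, sub_eq_zero] at hlog
  exact Real.log_injOn_pos ((hpos x hx).trans_le (margProb_anti hp hAB x)) (hpos x hx)
    (hlog.resolve_left hx.ne')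

theorem eq_on_of_jointEntropy_eq (hp : ∀ x, 0 ≤ p x) {A B : Finset (Fin n)}
    (hAB : A ⊆ B) (hH : jointEntropy p A = jointEntropy p B) {x x' : ∀ i, Fin (m i)}
    (hx : 0 < p x) (hx' : 0 < p x') (hA : ∀ i ∈ A, x' i = x i) : ∀ i ∈ B, x' i = x i := by
  by_contra hB
  have := margProb_add_le hp hAB hA hB
  rw [margProb_eq_of_jointEntropy_eq hp hAB hH hx] at this
  linarith

theorem card_mul_marg1_le_one (hp : IsPMF p) {i j t : Fin n} (hi : ∀ u, 0 < marg1 p i u)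
    (hij : ∀ u v, marg2 p i j u v = marg1 p i u * marg1 p j v)
    (hit : ∀ u w, marg2 p i t u w = marg1 p i u * marg1 p t w)
    (hdet : ∀ x x', 0 < p x → 0 < p x' → x' j = x j → x' t = x t → x' i = x i)
    (v : Fin (m j)) : (m i : ℝ) * marg1 p j v ≤ 1 := by
  classical
  set S : Fin (m i) → Finset (Fin (m t)) := fun u =>
    univ.filter fun w => ∃ z, 0 < p z ∧ z i = u ∧ z t = w ∧ z j = v
  have hdisj : Set.PairwiseDisjoint ↑(univ : Finset (Fin (m i))) S := by
    intro u _ u' _ huu'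
    refine disjoint_left.mpr fun w hw hw' => huu' ?_
    obtain ⟨z, hz, rfl, hzt, hzj⟩ := (mem_filter.mp hw).2
    obtain ⟨z', hz', rfl, hzt', hzj'⟩ := (mem_filter.mp hw').2
    exact (hdet z z' hz hz' (hzj'.trans hzj.symm) (hzt'.trans hzt.symm)).symm
  have hcover : ∀ u, marg1 p j v ≤ ∑ w ∈ S u, marg1 p t w := by
    intro u
    have hle : marg2 p i j u v ≤ ∑ w ∈ S u, marg2 p i t u w := by
      rw [sum_marg2_mem]
      refine sum_le_sum fun z _ => ?_
      rcases (hp.1 z).eq_or_lt with hz | hz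
      · simp [← hz]
      by_cases hzuv : z i = u ∧ z j = v
      · have hzS : z t ∈ S u := mem_filter.mpr ⟨mem_univ _, z, hz, hzuv.1, rfl, hzuv.2⟩
        rw [if_pos hzuv, if_pos ⟨hzuv.1, hzS⟩]
      · rw [if_neg hzuv]; split_ifs <;> simp [hz.le]
    simp only [hij, hit, ← mul_sum] at hle
    exact le_of_mul_le_mul_left hle (hi u)
  calc (m i : ℝ) * marg1 p j v = ∑ _u : Fin (m i), marg1 p j v := by simp
    _ ≤ ∑ u, ∑ w ∈ S u, marg1 p t w := sum_le_sum fun u _ => hcover u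
    _ = ∑ w ∈ univ.biUnion S, marg1 p t w := (sum_biUnion hdisj).symm
    _ ≤ ∑ w, marg1 p t w :=
      sum_le_sum_of_subset_of_nonneg (subset_univ _) fun w _ _ => marg1_nonneg p hp.1 t w
    _ = 1 := sum_marg1 p hp.2 t

theorem card_mul_marg1_le_one_of_jointEntropy (hp : IsPMF p) {i j t : Fin n}
    (hi : ∀ u, 0 < marg1 p i u) (hj : ∀ v, 0 < marg1 p j v) (ht : ∀ w, 0 < marg1 p t w)
    (hij : jointEntropy p {i, j} = jointEntropy p {i} + jointEntropy p {j})
    (hit : jointEntropy p {i, t} = jointEntropy p {i} + jointEntropy p {t})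
    (hdet : jointEntropy p {j, t} = jointEntropy p {i, j, t}) :
    ∀ v, (m i : ℝ) * marg1 p j v ≤ 1 := by
  refine card_mul_marg1_le_one hp hi (marg2_eq_mul_of_jointEntropy_pair p hp hi hj hij)
    (marg2_eq_mul_of_jointEntropy_pair p hp hi ht hit) fun x x' hx hx' hxj hxt => ?_
  refine eq_on_of_jointEntropy_eq hp.1 (subset_insert i _) hdet hx hx' ?_ i (mem_insert_self _ _)
  simp [hxj, hxt]

end

theorem jointEntropy_relations_of_rank {m : Fin 4 → ℕ} {p : (∀ i, Fin (m i)) → ℝ}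
    {a b : ℝ} (hEnt : ∀ A, jointEntropy p A = a * rU35hat4 A + b * r24 A)
    {i j : Fin 4} (hi : i ≠ 3) (hj : j ≠ 3) (hij : i ≠ j) :
    jointEntropy p {i, j} = jointEntropy p {i} + jointEntropy p {j} ∧
      jointEntropy p {i, 3} = jointEntropy p {i} + jointEntropy p {3} ∧
      jointEntropy p {j, 3} = jointEntropy p {i, j, 3} := by
  simp only [hEnt]
  fin_cases i <;> fin_cases j <;> simp_all [rU35hat4, r24, card_insert_of_notMem] <;>
    norm_num [min_def] <;> constructor <;> ring

theorem statement10 {m : Fin 4 → ℕ} (p : (∀ i, Fin (m i)) → ℝ)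
    (hpmf : IsPMF p)
    (hpos : ∀ (i : Fin 4) (x : Fin (m i)), 0 < marg1 p i x)
    (a b : ℝ)
    (hEnt : ∀ A : Finset (Fin 4), jointEntropy p A = a * rU35hat4 A + b * r24 A) :
    (∀ i : Fin 4, i ≠ 3 → ∀ x : Fin (m i), marg1 p i x = (m i : ℝ)⁻¹) ∧
    m 0 = m 1 ∧ m 1 = m 2 ∧ a + b = Real.log (m 0) := by
  have hbound : ∀ i j : Fin 4, i ≠ 3 → j ≠ 3 → i ≠ j →
      ∀ v, (m i : ℝ) * marg1 p j v ≤ 1 := by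
    intro i j hi hj hij
    obtain ⟨hsplit_ij, hsplit_i3, hdet⟩ := jointEntropy_relations_of_rank hEnt hi hj hij
    exact card_mul_marg1_le_one_of_jointEntropy hpmf (hpos i) (hpos j) (hpos 3)
      hsplit_ij hsplit_i3 hdet
  have hle : ∀ i j : Fin 4, i ≠ 3 → j ≠ 3 → i ≠ j → m i ≤ m j := by
    intro i j hi hj hij
    simpa using le_card_of_sum_eq_one (sum_marg1 p hpmf.2 j) (hbound i j hi hj hij)
  have h01 : m 0 = m 1 := le_antisymm (hle 0 1 (by decide) (by decide) (by decide))
    (hle 1 0 (by decide) (by decide) (by decide))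
  have h12 : m 1 = m 2 := le_antisymm (hle 1 2 (by decide) (by decide) (by decide))
    (hle 2 1 (by decide) (by decide) (by decide))
  have huniform : ∀ i : Fin 4, i ≠ 3 → ∀ x : Fin (m i), marg1 p i x = (m i : ℝ)⁻¹ := by
    intro i hi
    obtain ⟨k, hk, hki, hmk⟩ : ∃ k, k ≠ 3 ∧ k ≠ i ∧ m k = m i := by
      fin_cases i
      exacts [⟨1, by decide, by decide, h01.symm⟩, ⟨0, by decide, by decide, h01⟩,
        ⟨1, by decide, by decide, h12⟩, absurd rfl hi]
    have hbound_i : ∀ v, (m i : ℝ) * marg1 p i v ≤ 1 := by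
      simpa [hmk] using hbound k i hk hi hki
    simpa using eq_inv_card_of_sum_eq_one (sum_marg1 p hpmf.2 i) (by simpa using hbound_i)
  refine ⟨huniform, h01, h12, ?_⟩
  rw [← jointEntropy_singleton_of_uniform p hpmf.2 (huniform 0 (by decide)), hEnt, rU35hat4,
    if_neg (by decide)]
  norm_num [r24]
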